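/- arXiv:2505.05169 — 2 statements merged into one kernel-verified Lean document; each statement's English description precedes it below -/
import Mathlib

section
/- Let n, T be positive integers with n ≤ T, and suppose the potential Φ(s) = Σ_{i=1}^n (1-ε)^{Y_i(s)/m} · (1 - εP*/m)^{T-s} satisfies: for each s, if Σ_i α_i X_i(s+1) ≥ P*·Σ_i α_i where α_i = (1-ε)^{Y_i(s)/m} and Y_i(s+1) = Y_i(s) + X_i(s+1) with X_i(s+1) ∈ [0, m], then Φ(s+1) ≤ Φ(s). Prove this implication. -/
open Real Finset

lemma rpow_le_one_sub_mul {b p : ℝ} (hb0 : 0 < b) (hp0 : 0 ≤ p) (hp1 : p ≤ 1) :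
    b ^ p ≤ 1 - p * (1 - b) := by
  have h := convexOn_exp.2 (Set.mem_univ (Real.log b)) (Set.mem_univ (0:ℝ)) hp0
    (sub_nonneg.2 hp1) (by ring)
  simp only [smul_eq_mul, mul_zero, add_zero, Real.exp_zero, Real.exp_log hb0] at h
  rw [Real.rpow_def_of_pos hb0]
  calc Real.exp (Real.log b * p) = Real.exp (p * Real.log b) := by ring_nf
    _ ≤ p * b + (1 - p) * 1 := h
    _ = 1 - p * (1 - b) := by ring

theorem stmt_9 (n T s : ℕ) (hn : 0 < n) (hT : 0 < T) (hsT : s < T)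
    (ε m P : ℝ) (he0 : 0 < ε) (he1 : ε < 1) (hm : 0 < m) (hP0 : 0 < P) (hPm : P ≤ m)
    (Y X : Fin n → ℝ) (hY : ∀ i, 0 ≤ Y i) (hX0 : ∀ i, 0 ≤ X i) (hXm : ∀ i, X i ≤ m)
    (hkey : P * ∑ i, (1 - ε) ^ (Y i / m) ≤ ∑ i, (1 - ε) ^ (Y i / m) * X i) :
    ∑ i, (1 - ε) ^ ((Y i + X i) / m) * (1 - ε * P / m) ^ (T - (s + 1)) ≤
      ∑ i, (1 - ε) ^ (Y i / m) * (1 - ε * P / m) ^ (T - s) := by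
  have hb0 : (0:ℝ) < 1 - ε := by linarith
  have hq0 : (0:ℝ) ≤ 1 - ε * P / m := by
    rw [sub_nonneg, div_le_one hm]; nlinarith
  have hts : T - s = (T - (s + 1)) + 1 := by omega
  have h1 : ∀ i, (1 - ε) ^ ((Y i + X i) / m) ≤
      (1 - ε) ^ (Y i / m) * (1 - (X i / m) * ε) := by
    intro i
    rw [add_div, Real.rpow_add hb0]
    refine mul_le_mul_of_nonneg_left ?_ (Real.rpow_nonneg hb0.le _)
    have := rpow_le_one_sub_mul hb0 (div_nonneg (hX0 i) hm.le)
      ((div_le_one hm).mpr (hXm i))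
    simpa using this
  have hsum : ∑ i, (1 - ε) ^ ((Y i + X i) / m) ≤
      (∑ i, (1 - ε) ^ (Y i / m)) * (1 - ε * P / m) := by
    calc ∑ i, (1 - ε) ^ ((Y i + X i) / m)
        ≤ ∑ i, (1 - ε) ^ (Y i / m) * (1 - (X i / m) * ε) :=
          Finset.sum_le_sum fun i _ => h1 i
      _ = ∑ i, (1 - ε) ^ (Y i / m) - (ε / m) * ∑ i, (1 - ε) ^ (Y i / m) * X i := by
          rw [Finset.mul_sum, ← Finset.sum_sub_distrib]
          exact Finset.sum_congr rfl fun i _ => by ring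
      _ ≤ ∑ i, (1 - ε) ^ (Y i / m) - (ε / m) * (P * ∑ i, (1 - ε) ^ (Y i / m)) := by
          have hem : 0 ≤ ε / m := div_nonneg he0.le hm.le
          nlinarith [mul_le_mul_of_nonneg_left hkey hem]
      _ = (∑ i, (1 - ε) ^ (Y i / m)) * (1 - ε * P / m) := by ring
  calc ∑ i, (1 - ε) ^ ((Y i + X i) / m) * (1 - ε * P / m) ^ (T - (s + 1))
      = (∑ i, (1 - ε) ^ ((Y i + X i) / m)) * (1 - ε * P / m) ^ (T - (s + 1)) := by
        rw [← Finset.sum_mul]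
    _ ≤ ((∑ i, (1 - ε) ^ (Y i / m)) * (1 - ε * P / m)) * (1 - ε * P / m) ^ (T - (s + 1)) :=
        mul_le_mul_of_nonneg_right hsum (pow_nonneg hq0 _)
    _ = (∑ i, (1 - ε) ^ (Y i / m)) * (1 - ε * P / m) ^ (T - s) := by
        rw [hts, pow_succ]; ring
    _ = ∑ i, (1 - ε) ^ (Y i / m) * (1 - ε * P / m) ^ (T - s) := by
        rw [Finset.sum_mul]
end

section
/- Let ν, ν̂ ∈ [0,1], C > 0, N ≥ 1, and r(v,N) = sqrt(C·v/N) + C/N. If |ν - ν̂| ≤ r(ν̂, N), then r(ν̂, N) ≤ 3·r(ν, N). -/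
theorem stmt_14 (ν νh C : ℝ) (hν0 : 0 ≤ ν) (hν1 : ν ≤ 1) (hνh0 : 0 ≤ νh) (hνh1 : νh ≤ 1)
    (hC : 0 < C) (N : ℕ) (hN : 1 ≤ N)
    (h : |ν - νh| ≤ Real.sqrt (C * νh / N) + C / N) :
    Real.sqrt (C * νh / N) + C / N ≤ 3 * (Real.sqrt (C * ν / N) + C / N) := by
  have hNpos : (0:ℝ) < N := by exact_mod_cast Nat.pos_of_ne_zero (by omega)
  have hCN : (0:ℝ) ≤ C / N := by positivity
  set b := Real.sqrt (C / N) with hb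
  set x := Real.sqrt νh with hx
  set y := Real.sqrt ν with hy
  have hb0 : 0 ≤ b := Real.sqrt_nonneg _
  have hx0 : 0 ≤ x := Real.sqrt_nonneg _
  have hy0 : 0 ≤ y := Real.sqrt_nonneg _
  have hb2 : b ^ 2 = C / N := Real.sq_sqrt hCN
  have hx2 : x ^ 2 = νh := Real.sq_sqrt hνh0
  have hy2 : y ^ 2 = ν := Real.sq_sqrt hν0
  have e1 : Real.sqrt (C * νh / N) = b * x := by
    rw [hb, hx, ← Real.sqrt_mul hCN]
    ring_nf
  have e2 : Real.sqrt (C * ν / N) = b * y := by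
    rw [hb, hy, ← Real.sqrt_mul hCN]
    ring_nf
  rw [e1, ← hb2] at h ⊢
  rw [e2]
  have key : x ^ 2 ≤ y ^ 2 + b * x + b ^ 2 := by
    have := abs_le.mp h
    nlinarith [this.1]
  nlinarith [sq_nonneg (x - y - b), sq_nonneg (x - 2*b), mul_nonneg hb0 hx0,
    mul_nonneg hb0 hy0, mul_nonneg hx0 hy0, sq_nonneg b]
end
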